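/- arXiv:1502.01508 — 2 statements merged into one kernel-verified Lean document; each statement's English description precedes it below -/
import Mathlib

section
/- If R is an Armendariz ring, then for every positive integer n the upper triangular matrix ring T_n(R) is almost Armendariz. -/
/-- An element `a` of a ring `R` is *strongly nilpotent* if every sequence
`a₀ = a`, `aₙ₊₁ ∈ aₙ R aₙ` is eventually zero. -/
def IsStronglyNilpotent {R : Type*} [Ring R] (a : R) : Prop :=
  ∀ s : ℕ → R, s 0 = a → (∀ n : ℕ, ∃ r : R, s (n + 1) = s n * r * s n) → ∃ n : ℕ, s n = 0

/-- The prime radical `P(R)` of a ring `R`: the intersection of all prime two-sided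
ideals of `R`, equivalently the set of strongly nilpotent elements of `R`. -/
def primeRadical (R : Type*) [Ring R] : Set R :=
  {a : R | IsStronglyNilpotent a}

/-- A ring `R` is *almost Armendariz* if whenever `f, g ∈ R[x]` satisfy `f g = 0`, every
product of a coefficient of `f` with a coefficient of `g` lies in the prime radical `P(R)`. -/
def IsAlmostArmendariz (R : Type*) [Ring R] : Prop :=
  ∀ f g : Polynomial R, f * g = 0 → ∀ i j : ℕ, f.coeff i * g.coeff j ∈ primeRadical R

/-- A ring `R` is *Armendariz* if whenever `f, g ∈ R[x]` satisfy `f g = 0`, every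
product of a coefficient of `f` with a coefficient of `g` is zero. -/
def IsArmendariz (R : Type*) [Ring R] : Prop :=
  ∀ f g : Polynomial R, f * g = 0 → ∀ i j : ℕ, f.coeff i * g.coeff j = 0

/-- `T_n(R)`: the ring of `n × n` upper triangular matrices over `R`, as a subring of the
full matrix ring. -/
def upperTriangularSubring (R : Type*) [Ring R] (n : ℕ) :
    Subring (Matrix (Fin n) (Fin n) R) where
  carrier := {M | ∀ i j : Fin n, j < i → M i j = 0}
  zero_mem' := fun _ _ _ => rfl
  one_mem' := fun _ _ h => Matrix.one_apply_ne (ne_of_gt h)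
  add_mem' := fun ha hb i j h => by
    simp only [Matrix.add_apply, ha i j h, hb i j h, add_zero]
  neg_mem' := fun ha i j h => by
    simp only [Matrix.neg_apply, ha i j h, neg_zero]
  mul_mem' := fun {a b} ha hb i j h => by
    rw [Matrix.mul_apply]
    apply Finset.sum_eq_zero
    intro k _
    rcases le_or_gt k j with hk | hk
    · rw [ha i k (lt_of_le_of_lt hk h), zero_mul]
    · rw [hb k j hk, mul_zero]

/-
Each diagonal entry `M ↦ M k k` is a ring homomorphism `T_n(R) → R`, so it carries a relation
`f g = 0` in `T_n(R)[x]` to one in `R[x]`, where the Armendariz property kills every product of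
coefficients. Hence every product of coefficients of `f` and `g` in `T_n(R)` has zero diagonal.
Such a matrix lies in the first step of the filtration of `T_n(R)` by the superdiagonal bands
`J_d = {M | M i j = 0 for j < i + d}`, which is multiplicative (`J_d J_e ⊆ J_{d+e}`) and vanishes at
`d = n`; in such a filtration every sequence `s (m + 1) = s m * r * s m` started in `J_1` climbs
one step at a time, so it reaches `0`.
-/

theorem isStronglyNilpotent_of_mem_filtration {A : Type*} [Ring A] (J : ℕ → Set A)
    (hJ : Antitone J) (hJ₀ : ∀ x, x ∈ J 0)
    (hmul : ∀ d e x y, x ∈ J d → y ∈ J e → x * y ∈ J (d + e))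
    {N : ℕ} (hN : ∀ x ∈ J N, x = 0) {a : A} (ha : a ∈ J 1) : IsStronglyNilpotent a := by
  intro s hs₀ hs
  have hsJ : ∀ m, s m ∈ J (m + 1) := by
    intro m
    induction m with
    | zero => rwa [hs₀]
    | succ m ih =>
      obtain ⟨r, hr⟩ := hs m
      rw [hr]
      exact hmul (m + 1) 1 _ _ (hmul (m + 1) 0 _ _ ih (hJ₀ r)) (hJ (by omega) ih)
  exact ⟨N, hN _ (hJ N.le_succ (hsJ N))⟩

theorem IsArmendariz.map_coeff_mul_coeff_eq_zero {R A : Type*} [Ring R] [Ring A]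
    (hR : IsArmendariz R) (φ : A →+* R) {f g : Polynomial A} (hfg : f * g = 0) (i j : ℕ) :
    φ (f.coeff i * g.coeff j) = 0 := by
  have hmap : f.map φ * g.map φ = 0 := by rw [← Polynomial.map_mul, hfg, Polynomial.map_zero]
  simpa only [map_mul, Polynomial.coeff_map] using hR _ _ hmap i j

namespace upperTriangularSubring

variable {R : Type*} [Ring R] {n : ℕ}

theorem apply_eq_zero_of_lt (M : upperTriangularSubring R n) {i j : Fin n} (h : j < i) :
    (M : Matrix (Fin n) (Fin n) R) i j = 0 :=
  M.2 i j h

variable (R n) in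
def diagHom (k : Fin n) : upperTriangularSubring R n →+* R where
  toFun M := (M : Matrix (Fin n) (Fin n) R) k k
  map_one' := Matrix.one_apply_eq k
  map_zero' := rfl
  map_add' _ _ := rfl
  map_mul' M N := by
    change ((M : Matrix (Fin n) (Fin n) R) * N) k k = _
    rw [Matrix.mul_apply, Finset.sum_eq_single_of_mem k (Finset.mem_univ k)]
    intro l _ hl
    rcases hl.lt_or_gt with h | h
    · rw [apply_eq_zero_of_lt M h, zero_mul]
    · rw [apply_eq_zero_of_lt N h, mul_zero]

variable (R n) in
def bandFiltration (d : ℕ) : Set (upperTriangularSubring R n) :=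
  {M | ∀ i j : Fin n, (j : ℕ) < i + d → (M : Matrix (Fin n) (Fin n) R) i j = 0}

theorem bandFiltration_antitone : Antitone (bandFiltration R n) :=
  fun _ _ hde _ hM i j hij => hM i j (by omega)

theorem mem_bandFiltration_zero (M : upperTriangularSubring R n) : M ∈ bandFiltration R n 0 :=
  fun _ _ hij => apply_eq_zero_of_lt M (Fin.lt_def.mpr hij)

theorem mul_mem_bandFiltration {d e : ℕ} {M N : upperTriangularSubring R n}
    (hM : M ∈ bandFiltration R n d) (hN : N ∈ bandFiltration R n e) :
    M * N ∈ bandFiltration R n (d + e) := by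
  intro i j hij
  change ((M : Matrix (Fin n) (Fin n) R) * N) i j = 0
  rw [Matrix.mul_apply]
  refine Finset.sum_eq_zero fun l _ => ?_
  rcases lt_or_ge (l : ℕ) (i + d) with hl | hl
  · rw [hM i l hl, zero_mul]
  · rw [hN l j (by omega), mul_zero]

theorem eq_zero_of_mem_bandFiltration {M : upperTriangularSubring R n}
    (hM : M ∈ bandFiltration R n n) : M = 0 := by
  ext i j
  exact hM i j (by omega)

theorem mem_bandFiltration_one_of_diagHom_eq_zero {M : upperTriangularSubring R n}
    (hM : ∀ k, diagHom R n k M = 0) : M ∈ bandFiltration R n 1 := by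
  intro i j hij
  rcases (Nat.lt_succ_iff.mp hij).lt_or_eq with h | h
  · exact apply_eq_zero_of_lt M (Fin.lt_def.mpr h)
  · rw [Fin.ext h]
    exact hM i

theorem isStronglyNilpotent_of_diagHom_eq_zero {M : upperTriangularSubring R n}
    (hM : ∀ k, diagHom R n k M = 0) : IsStronglyNilpotent M :=
  isStronglyNilpotent_of_mem_filtration _ bandFiltration_antitone mem_bandFiltration_zero
    (fun _ _ _ _ => mul_mem_bandFiltration) (fun _ => eq_zero_of_mem_bandFiltration)
    (mem_bandFiltration_one_of_diagHom_eq_zero hM)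

end upperTriangularSubring

/-- If `R` is an Armendariz ring, then for every positive integer `n` the upper triangular
matrix ring `T_n(R)` is almost Armendariz. -/
theorem upperTriangular_almostArmendariz_of_armendariz {R : Type*} [Ring R]
    (hR : IsArmendariz R) :
    ∀ n : ℕ, 0 < n → IsAlmostArmendariz (upperTriangularSubring R n) := by
  intro n _ f g hfg i j
  exact upperTriangularSubring.isStronglyNilpotent_of_diagHom_eq_zero fun k =>
    hR.map_coeff_mul_coeff_eq_zero (upperTriangularSubring.diagHom R n k) hfg i j
end

section
/- If R is a reduced ring, then the trivial extension T(R, R) of R by the bimodule R is almost Armendariz. -/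
/-!
The projection `T(R, R) → R`, `(r, m) ↦ r`, is a ring map onto a reduced ring whose kernel
`0 × R` has square zero, so it consists of strongly nilpotent elements. A reduced ring is
Armendariz, so if `f g = 0` over `T(R, R)` then every product of coefficients maps to `0` in `R`,
i.e. lies in the kernel, hence in the prime radical.
-/

namespace IsReduced

variable {R : Type*} [Ring R] [IsReduced R] {a b : R}

theorem mul_eq_zero_symm (h : a * b = 0) : b * a = 0 :=
  IsReduced.eq_zero _ ⟨2, by rw [sq, mul_assoc, ← mul_assoc a, h, zero_mul, mul_zero]⟩

theorem mul_mul_eq_zero_of_mul_eq_zero (h : a * b = 0) (r : R) : a * r * b = 0 :=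
  mul_eq_zero_symm (by rw [← mul_assoc, mul_eq_zero_symm h, zero_mul])

theorem mul_eq_zero_of_mul_mul_self_eq_zero (h : a * b * b = 0) : a * b = 0 :=
  IsReduced.eq_zero _ ⟨2, by rw [sq, mul_assoc, mul_eq_zero_symm h, mul_zero]⟩

end IsReduced

namespace Polynomial

open Finset

variable {R : Type*} [Ring R] [IsReduced R] {f g : R[X]}

/-- Reduced rings are Armendariz. Induction on `(i + j, j)` ordered lexicographically: in the
coefficient of `X ^ (i + j)` in `f * g`, multiplied on the right by `bⱼ`, every term other than
`aᵢ bⱼ bⱼ` contains some `aₚ b_q` with `q < j` or, by reversibility, some `aₚ bⱼ` with `p < i`. -/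
theorem coeff_mul_coeff_eq_zero_of_mul_eq_zero (h : f * g = 0) (i j : ℕ) :
    f.coeff i * g.coeff j = 0 := by
  have hsum : ∑ x ∈ antidiagonal (i + j), f.coeff x.1 * g.coeff x.2 * g.coeff j = 0 := by
    rw [← sum_mul, ← coeff_mul, h, coeff_zero, zero_mul]
  rw [sum_eq_single_of_mem (i, j) (HasAntidiagonal.mem_antidiagonal.2 rfl)] at hsum
  · exact IsReduced.mul_eq_zero_of_mul_mul_self_eq_zero hsum
  rintro ⟨p, q⟩ hpq hne
  replace hpq : p + q = i + j := HasAntidiagonal.mem_antidiagonal.1 hpq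
  have hqj : q ≠ j := by
    rintro rfl
    exact hne (by rw [Nat.add_right_cancel hpq])
  rcases lt_or_gt_of_ne hqj with hq | hq
  · rw [coeff_mul_coeff_eq_zero_of_mul_eq_zero h p q, zero_mul]
  · exact IsReduced.mul_mul_eq_zero_of_mul_eq_zero
      (coeff_mul_coeff_eq_zero_of_mul_eq_zero h p j) _
termination_by (i + j, j)
decreasing_by
  · exact hpq ▸ Prod.Lex.right _ hq
  · exact Prod.Lex.left _ _ (by omega)

end Polynomial

theorem isStronglyNilpotent_of_forall_mul_mul_self_eq_zero {R : Type*} [Ring R] {a : R}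
    (h : ∀ r, a * r * a = 0) : IsStronglyNilpotent a := by
  intro s hs0 hstep
  obtain ⟨r, hs1⟩ := hstep 0
  exact ⟨1, by rw [hs1, hs0, h]⟩

theorem isAlmostArmendariz_of_ker_subset_primeRadical {A B : Type*} [Ring A] [Ring B]
    [IsReduced B] (φ : A →+* B) (hφ : (RingHom.ker φ : Set A) ⊆ primeRadical A) :
    IsAlmostArmendariz A := by
  intro f g hfg i j
  have hmap : f.map φ * g.map φ = 0 := by rw [← Polynomial.map_mul, hfg, Polynomial.map_zero]
  apply hφ
  rw [SetLike.mem_coe, RingHom.mem_ker, map_mul, ← Polynomial.coeff_map, ← Polynomial.coeff_map]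
  exact Polynomial.coeff_mul_coeff_eq_zero_of_mul_eq_zero hmap i j

namespace TrivSqZeroExt

variable {R M : Type*} [Ring R] [AddCommGroup M] [Module R M] [Module Rᵐᵒᵖ M]

theorem mul_mul_eq_zero_of_fst_eq_zero {x : TrivSqZeroExt R M} (hx : x.fst = 0)
    (y : TrivSqZeroExt R M) : x * y * x = 0 := by
  ext <;> simp [hx]

theorem ker_fstHom_subset_primeRadical [SMulCommClass R Rᵐᵒᵖ M] :
    (RingHom.ker (fstHom ℕ R M) : Set (TrivSqZeroExt R M)) ⊆ primeRadical _ :=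
  fun _ hx => isStronglyNilpotent_of_forall_mul_mul_self_eq_zero
    (mul_mul_eq_zero_of_fst_eq_zero hx)

end TrivSqZeroExt

/-- If `R` is a reduced ring, then the trivial extension `T(R, R)` of `R` by the
bimodule `R` is almost Armendariz. -/
theorem trivialExtension_almostArmendariz {R : Type*} [Ring R] [IsReduced R] :
    IsAlmostArmendariz (TrivSqZeroExt R R) :=
  isAlmostArmendariz_of_ker_subset_primeRadical _ TrivSqZeroExt.ker_fstHom_subset_primeRadical
end
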